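/- Let (V_j)_{j ∈ J} and (W_s)_{s ∈ S} be two finite families of finite sets of points in ℝ² (the convex parts of two decomposed non-convex polygons). Suppose that for every j ∈ J and s ∈ S there exist c, d ∈ ℝ such that every v ∈ V_j satisfies v.2 − c·v.1 − d ≤ 0 and every w ∈ W_s satisfies w.2 − c·w.1 − d ≥ 0. Then the two-dimensional Lebesgue measure of (⋃_{j ∈ J} convexHull ℝ V_j) ∩ (⋃_{s ∈ S} convexHull ℝ W_s) is zero. (This is the correctness of the model's non-overlapping constraints for non-convex polygons decomposed into convex parts: it suffices to have a separation line for each pair of parts belonging to distinct polygons.) -/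

import Mathlib

/-! Two convex hulls whose vertex sets lie on opposite sides of a line meet only on that line,
and a line is Lebesgue-null. Summing over the finitely many pairs of parts gives the claim. -/

open MeasureTheory

section Convex

variable {𝕜 E β : Type*} [Semiring 𝕜] [PartialOrder 𝕜] [AddCommMonoid E] [Module 𝕜 E]
  [AddCommMonoid β] [PartialOrder β] [IsOrderedAddMonoid β] [Module 𝕜 β] [PosSMulMono 𝕜 β]

theorem convexHull_inter_convexHull_subset_preimage_singleton {f : E →ₗ[𝕜] β} {s t : Set E}
    {r : β} (hs : ∀ x ∈ s, f x ≤ r) (ht : ∀ x ∈ t, r ≤ f x) :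
    convexHull 𝕜 s ∩ convexHull 𝕜 t ⊆ f ⁻¹' {r} := by
  rintro x ⟨hxs, hxt⟩
  have hle : f x ≤ r := convexHull_min hs (convex_halfSpace_le f.isLinear r) hxs
  have hge : r ≤ f x := convexHull_min ht (convex_halfSpace_ge f.isLinear r) hxt
  exact le_antisymm hle hge

end Convex

theorem MeasureTheory.Measure.addHaar_preimage_singleton_of_ne_zero {E : Type*}
    [NormedAddCommGroup E] [NormedSpace ℝ E] [MeasurableSpace E] [BorelSpace E]
    [FiniteDimensional ℝ E] (μ : Measure E) [μ.IsAddHaarMeasure] {f : E →ₗ[ℝ] ℝ} (hf : f ≠ 0)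
    (r : ℝ) : μ (f ⁻¹' {r}) = 0 := by
  have hlevel : ((affineSpan ℝ {r}).comap f.toAffineMap : Set E) = f ⁻¹' {r} := by
    rw [AffineSubspace.coe_comap, AffineSubspace.coe_affineSpan_singleton, LinearMap.coe_toAffineMap]
  rw [← hlevel]
  refine Measure.addHaar_affineSubspace μ _ fun htop => ?_
  have hmem (x : E) : f x = r := by
    have hx : x ∈ (affineSpan ℝ {r}).comap f.toAffineMap := htop ▸ AffineSubspace.mem_top ℝ E x
    rwa [← SetLike.mem_coe, hlevel] at hx
  obtain ⟨x, hx⟩ := DFunLike.ne_iff.mp hf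
  exact hx (by rw [hmem x, ← hmem 0, map_zero, LinearMap.zero_apply])

theorem MeasureTheory.measure_iUnion_inter_iUnion_null {α ι κ : Type*} [MeasurableSpace α]
    [Countable ι] [Countable κ] {μ : Measure α} {A : ι → Set α} {B : κ → Set α}
    (h : ∀ i k, μ (A i ∩ B k) = 0) : μ ((⋃ i, A i) ∩ ⋃ k, B k) = 0 := by
  simp_rw [Set.iUnion_inter, Set.inter_iUnion]
  exact measure_iUnion_null fun i => measure_iUnion_null (h i)

theorem volume_union_inter_eq_zero_of_separating_lines_general
    {J S : Type*} [Fintype J] [Fintype S]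
    (V : J → Set (ℝ × ℝ)) (W : S → Set (ℝ × ℝ))
    (h : ∀ j s, ∃ c d : ℝ,
      (∀ v ∈ V j, v.2 - c * v.1 - d ≤ 0) ∧ (∀ w ∈ W s, 0 ≤ w.2 - c * w.1 - d)) :
    MeasureTheory.volume ((⋃ j, convexHull ℝ (V j)) ∩ (⋃ s, convexHull ℝ (W s))) = 0 := by
  refine measure_iUnion_inter_iUnion_null fun j s => ?_
  obtain ⟨c, d, hVj, hWs⟩ := h j s
  let f : ℝ × ℝ →ₗ[ℝ] ℝ := LinearMap.snd ℝ ℝ ℝ - c • LinearMap.fst ℝ ℝ ℝ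
  have hf : ∀ p, f p = p.2 - c * p.1 := fun _ => rfl
  have hf0 : f ≠ 0 := fun h0 => by simpa [hf] using LinearMap.congr_fun h0 (0, 1)
  refine measure_mono_null ?_ (Measure.addHaar_preimage_singleton_of_ne_zero volume hf0 d)
  refine convexHull_inter_convexHull_subset_preimage_singleton (fun v hv => ?_) fun w hw => ?_
  · linarith [hVj v hv, hf v]
  · linarith [hWs w hw, hf w]

/-- For two finite families of finite vertex sets (the convex parts of two
decomposed non-convex polygons), if every pair of parts from distinct polygons admits a
separation line, then the intersection of the two unions of convex hulls has
two-dimensional Lebesgue measure zero. -/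
theorem volume_union_inter_eq_zero_of_separating_lines
    {J S : Type*} [Fintype J] [Fintype S]
    (V : J → Set (ℝ × ℝ)) (W : S → Set (ℝ × ℝ))
    (hV : ∀ j, (V j).Finite) (hW : ∀ s, (W s).Finite)
    (h : ∀ j s, ∃ c d : ℝ,
      (∀ v ∈ V j, v.2 - c * v.1 - d ≤ 0) ∧ (∀ w ∈ W s, 0 ≤ w.2 - c * w.1 - d)) :
    MeasureTheory.volume ((⋃ j, convexHull ℝ (V j)) ∩ (⋃ s, convexHull ℝ (W s))) = 0 :=
  volume_union_inter_eq_zero_of_separating_lines_general V W h
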